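/- Let h(S) = (Σ_{i∈S} a_i)/(b0 + Σ_{i∈S} b_i) with b0 > 0, a_i ≥ 0, b_i > 0, and suppose h is submodular over all subsets of N. Let n ∈ N be an element minimizing a_i/b_i over i ∈ N. Then for every S ⊆ N with n ∈ S and every j ∉ S, we have h(S) ≤ h(S∪{j}); i.e., h is monotone nondecreasing on the family of sets containing n. -/

import Mathlib

/-!
Adding `j` to `S` moves `h S` towards the ratio `r j = a j / b j`:
`h (S ∪ {j}) - h S = b j / (b0 + ∑_{S ∪ {j}} b) * (r j - h S)`.
So `h S ≤ h (S ∪ {j})` iff `h S ≤ r j`. If this failed for some `S = T ∪ {n}`, then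
`r n ≤ r j < h (T ∪ {n})` forces `r n < h T` and `r j ≤ h T`, hence `h (T ∪ {j}) ≤ h T`.
The `n`-increment at `T` is then negative, and the one at `T ∪ {j}` has a factor
`r n - h (T ∪ {j}) ≥ r n - h T` and a smaller weight `b n / (…)`, so it is strictly larger,
contradicting submodularity.
-/

open Finset

noncomputable def sumRatio {ι : Type*} (a b : ι → ℝ) (b0 : ℝ) (S : Finset ι) : ℝ :=
  (∑ i ∈ S, a i) / (b0 + ∑ i ∈ S, b i)

namespace sumRatio

variable {ι : Type*} {a b : ι → ℝ} {b0 : ℝ} {S : Finset ι}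

lemma denom_pos {N : Finset ι} (hb0 : 0 < b0) (hb : ∀ i ∈ N, 0 < b i) (hS : S ⊆ N) :
    0 < b0 + ∑ i ∈ S, b i :=
  add_pos_of_pos_of_nonneg hb0 (sum_nonneg fun i hi => (hb i (hS hi)).le)

variable [DecidableEq ι] {j : ι}

lemma denom_insert_pos (hj : j ∉ S) (hD : 0 < b0 + ∑ i ∈ S, b i) (hbj : 0 < b j) :
    0 < b0 + ∑ i ∈ insert j S, b i := by
  rw [sum_insert hj]
  linarith

lemma insert_sub (hj : j ∉ S) (hD : 0 < b0 + ∑ i ∈ S, b i) (hbj : 0 < b j) :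
    sumRatio a b b0 (insert j S) - sumRatio a b b0 S =
      b j / (b0 + ∑ i ∈ insert j S, b i) * (a j / b j - sumRatio a b b0 S) := by
  have hDj := denom_insert_pos hj hD hbj
  rw [sum_insert hj] at hDj ⊢
  unfold sumRatio
  rw [sum_insert hj, sum_insert hj]
  field_simp
  ring

lemma le_insert_iff (hj : j ∉ S) (hD : 0 < b0 + ∑ i ∈ S, b i) (hbj : 0 < b j) :
    sumRatio a b b0 S ≤ sumRatio a b b0 (insert j S) ↔ sumRatio a b b0 S ≤ a j / b j := by
  have hc : 0 < b j / (b0 + ∑ i ∈ insert j S, b i) :=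
    div_pos hbj (denom_insert_pos hj hD hbj)
  rw [← sub_nonneg, insert_sub hj hD hbj, mul_nonneg_iff_of_pos_left hc, sub_nonneg]

lemma insert_le_iff (hj : j ∉ S) (hD : 0 < b0 + ∑ i ∈ S, b i) (hbj : 0 < b j) :
    sumRatio a b b0 (insert j S) ≤ sumRatio a b b0 S ↔ a j / b j ≤ sumRatio a b b0 S := by
  have hc : 0 < b j / (b0 + ∑ i ∈ insert j S, b i) :=
    div_pos hbj (denom_insert_pos hj hD hbj)
  rw [← sub_nonpos, insert_sub hj hD hbj, ← neg_nonneg, ← mul_neg,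
    mul_nonneg_iff_of_pos_left hc, neg_nonneg, sub_nonpos]

lemma insert_le_of_le (hj : j ∉ S) (hD : 0 < b0 + ∑ i ∈ S, b i) (hbj : 0 < b j)
    (hle : sumRatio a b b0 S ≤ a j / b j) : sumRatio a b b0 (insert j S) ≤ a j / b j := by
  have hc : b j / (b0 + ∑ i ∈ insert j S, b i) ≤ 1 := by
    rw [div_le_one (denom_insert_pos hj hD hbj), sum_insert hj]
    linarith
  have := insert_sub (a := a) hj hD hbj
  nlinarith [mul_nonneg (sub_nonneg.2 hc) (sub_nonneg.2 hle)]

lemma insert_sub_lt_insert_insert_sub {T : Finset ι} {n : ι} (hnT : n ∉ T) (hjT : j ∉ T)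
    (hnj : n ≠ j) (hD : 0 < b0 + ∑ i ∈ T, b i) (hbn : 0 < b n) (hbj : 0 < b j)
    (hn : a n / b n < sumRatio a b b0 T) (hj : a j / b j ≤ sumRatio a b b0 T) :
    sumRatio a b b0 (insert n T) - sumRatio a b b0 T <
      sumRatio a b b0 (insert n (insert j T)) - sumRatio a b b0 (insert j T) := by
  have hnjT : n ∉ insert j T := by simp [hnj, hnT]
  have hDj := denom_insert_pos hjT hD hbj
  have hDn := denom_insert_pos hnT hD hbn
  have hTj : sumRatio a b b0 (insert j T) ≤ sumRatio a b b0 T :=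
    (insert_le_iff hjT hD hbj).2 hj
  have hfactor : b n / (b0 + ∑ i ∈ insert n (insert j T), b i) <
      b n / (b0 + ∑ i ∈ insert n T, b i) := by
    apply div_lt_div_of_pos_left hbn hDn
    simp only [sum_insert hnjT, sum_insert hjT, sum_insert hnT]
    linarith
  rw [insert_sub hnT hD hbn, insert_sub hnjT hDj hbn]
  calc b n / (b0 + ∑ i ∈ insert n T, b i) * (a n / b n - sumRatio a b b0 T)
      < b n / (b0 + ∑ i ∈ insert n (insert j T), b i) * (a n / b n - sumRatio a b b0 T) :=
        mul_lt_mul_of_neg_right hfactor (by linarith)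
    _ ≤ b n / (b0 + ∑ i ∈ insert n (insert j T), b i) *
          (a n / b n - sumRatio a b b0 (insert j T)) :=
        mul_le_mul_of_nonneg_left (by linarith)
          (div_pos hbn (denom_insert_pos hnjT hDj hbn)).le

end sumRatio

theorem stmt_6_general {ι : Type*} [DecidableEq ι] (N : Finset ι) (a b : ι → ℝ) (b0 : ℝ)
    (hb0 : 0 < b0) (hb : ∀ i ∈ N, 0 < b i)
    (h : Finset ι → ℝ)
    (hdef : ∀ S : Finset ι, h S = (∑ i ∈ S, a i) / (b0 + ∑ i ∈ S, b i))
    (hsub : ∀ S : Finset ι, S ⊆ N → ∀ i ∈ N, ∀ j ∈ N, i ∉ S → j ∉ S → i ≠ j →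
      h (insert i (insert j S)) - h (insert j S) ≤ h (insert i S) - h S)
    (n : ι) (hn : n ∈ N) (hnmin : ∀ i ∈ N, a n / b n ≤ a i / b i) :
    ∀ S : Finset ι, S ⊆ N → n ∈ S → ∀ j ∈ N, j ∉ S → h S ≤ h (insert j S) := by
  obtain rfl : h = sumRatio a b b0 := funext hdef
  intro S hSN hnS j hjN hjS
  rw [sumRatio.le_insert_iff hjS (sumRatio.denom_pos hb0 hb hSN) (hb j hjN)]
  by_contra! hjlt
  set T := S.erase n
  have hTN : T ⊆ N := (erase_subset n S).trans hSN
  have hnT : n ∉ T := notMem_erase n S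
  have hjT : j ∉ T := fun hj => hjS (mem_of_mem_erase hj)
  have hnj : n ≠ j := fun e => hjS (e ▸ hnS)
  have hD := sumRatio.denom_pos hb0 hb hTN
  rw [← insert_erase hnS] at hjlt
  have hnlt : a n / b n < sumRatio a b b0 T := by
    by_contra! hle
    have := sumRatio.insert_le_of_le hnT hD (hb n hn) hle
    linarith [hnmin j hjN]
  have hjle : a j / b j ≤ sumRatio a b b0 T :=
    hjlt.le.trans ((sumRatio.insert_le_iff hnT hD (hb n hn)).2 hnlt.le)
  exact (sumRatio.insert_sub_lt_insert_insert_sub hnT hjT hnj hD (hb n hn) (hb j hjN) hnlt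
    hjle).not_ge (hsub T hTN n hn j hjN hnT hjT hnj)

theorem stmt_6 {ι : Type*} [DecidableEq ι] (N : Finset ι) (a b : ι → ℝ) (b0 : ℝ)
    (hb0 : 0 < b0) (ha : ∀ i ∈ N, 0 ≤ a i) (hb : ∀ i ∈ N, 0 < b i)
    (h : Finset ι → ℝ)
    (hdef : ∀ S : Finset ι, h S = (∑ i ∈ S, a i) / (b0 + ∑ i ∈ S, b i))
    (hsub : ∀ S : Finset ι, S ⊆ N → ∀ i ∈ N, ∀ j ∈ N, i ∉ S → j ∉ S → i ≠ j →
      h (insert i (insert j S)) - h (insert j S) ≤ h (insert i S) - h S)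
    (n : ι) (hn : n ∈ N) (hnmin : ∀ i ∈ N, a n / b n ≤ a i / b i) :
    ∀ S : Finset ι, S ⊆ N → n ∈ S → ∀ j ∈ N, j ∉ S → h S ≤ h (insert j S) :=
  stmt_6_general N a b b0 hb0 hb h hdef hsub n hn hnmin
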